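/- Let κ ∈ ℝ, κ ≠ 0, and let ρ̂ : (0,∞)² → ℝ be C¹ and positively homogeneous of degree κ, i.e. ρ̂(Aδ, Aη) = A^κ ρ̂(δ,η) for all A > 0 and (δ,η) ∈ (0,∞)². Define p̂_rad(δ,η) = δ·∂_δρ̂ − ρ̂, p̂_tan = p̂_rad + (3/2)η·∂_ηρ̂, q̂ = p̂_tan − p̂_rad. Let J ⊆ (0,∞) be an open interval and let δ, η : J → (0,∞) and m : J → ℝ be differentiable with 2m(r) < r on J, satisfying for all r ∈ J: m'(r) = 4πr²ρ̂(δ(r),η(r)); η'(r) = −(3/r)(η(r) − δ(r)(1 − 2m(r)/r)^{−1/2}); and (d/dr)[p̂_rad(δ(r),η(r))] = (2/r)q̂(δ(r),η(r)) − (ρ̂ + p̂_rad)(δ(r),η(r))·(m(r)/r² + 4πr·p̂_rad(δ(r),η(r)))/(1 − 2m(r)/r). Then for every A > 0 the rescaled functions δ_A(r) := A^{2/κ}δ(Ar), η_A(r) := A^{2/κ}η(Ar), m_A(r) := A^{−1}m(Ar), defined for r ∈ A^{−1}J, satisfy the same three equations. -/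

import Mathlib

open Real Set Topology

/-! Homogeneity of degree `κ` of `ρ̂` makes its partial derivatives homogeneous of degree
`κ - 1`, so `p̂_rad` and `q̂` are homogeneous of degree `κ` too. Hence the factor `A^{2/κ}`
multiplies `ρ̂`, `p̂_rad` and `q̂` by `A²`, and after the chain rule for `r ↦ A r` each
equation for the rescaled profiles at `r` is the original equation at `A r` multiplied by
a power of `A`. -/

/-- Radial pressure `p̂_rad(δ,η) = δ·∂_δρ̂(δ,η) − ρ̂(δ,η)`. -/
noncomputable def pradF (ρ : ℝ × ℝ → ℝ) (x : ℝ × ℝ) : ℝ :=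
  x.1 * fderiv ℝ ρ x (1, 0) - ρ x

/-- Tangential pressure `p̂_tan(δ,η) = p̂_rad(δ,η) + (3/2)η·∂_ηρ̂(δ,η)`. -/
noncomputable def ptanF (ρ : ℝ × ℝ → ℝ) (x : ℝ × ℝ) : ℝ :=
  pradF ρ x + (3 / 2) * x.2 * fderiv ℝ ρ x (0, 1)

/-- Anisotropic pressure `q̂ = p̂_tan − p̂_rad`. -/
noncomputable def qF (ρ : ℝ × ℝ → ℝ) (x : ℝ × ℝ) : ℝ :=
  ptanF ρ x - pradF ρ x

theorem HasDerivAt.comp_const_mul {𝕜 F : Type*} [NontriviallyNormedField 𝕜]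
    [NormedAddCommGroup F] [NormedSpace 𝕜 F] {f : 𝕜 → F} {f' : F} {A r : 𝕜}
    (hf : HasDerivAt f f' (A * r)) : HasDerivAt (fun u => f (A * u)) (A • f') r :=
  (hf.scomp r ((hasDerivAt_id r).const_mul A)).congr_deriv (by rw [mul_one])

theorem smul_fderiv_smul_eq_of_eventuallyEq {𝕜 E F : Type*} [NontriviallyNormedField 𝕜]
    [NormedAddCommGroup E] [NormedSpace 𝕜 E] [NormedAddCommGroup F] [NormedSpace 𝕜 F]
    {f : E → F} {B c : 𝕜} {x : E} (h : (fun y => f (B • y)) =ᶠ[𝓝 x] fun y => c • f y) :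
    B • fderiv 𝕜 f (B • x) = c • fderiv 𝕜 f x := by
  rw [← fderiv_comp_smul, h.fderiv_eq]
  exact congrFun (fderiv_const_smul_field c) x

section Homogeneous

variable {κ : ℝ} {ρ : ℝ × ℝ → ℝ}

theorem fderiv_apply_of_homogeneous
    (hhom : ∀ A > (0 : ℝ), ∀ x : ℝ × ℝ, 0 < x.1 → 0 < x.2 → ρ (A * x.1, A * x.2) = A ^ κ * ρ x)
    {B d e : ℝ} (hB : 0 < B) (hd : 0 < d) (he : 0 < e) (v : ℝ × ℝ) :
    B * fderiv ℝ ρ (B * d, B * e) v = B ^ κ * fderiv ℝ ρ (d, e) v := by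
  have hquadrant : ∀ᶠ y in 𝓝 (d, e), 0 < y.1 ∧ 0 < y.2 :=
    (continuousAt_fst.eventually (lt_mem_nhds hd)).and
      (continuousAt_snd.eventually (lt_mem_nhds he))
  have h := smul_fderiv_smul_eq_of_eventuallyEq (f := ρ) (B := B) (c := B ^ κ)
    (hquadrant.mono fun y hy => hhom B hB y hy.1 hy.2)
  simpa using congrArg (· v) h

theorem pradF_of_homogeneous
    (hhom : ∀ A > (0 : ℝ), ∀ x : ℝ × ℝ, 0 < x.1 → 0 < x.2 → ρ (A * x.1, A * x.2) = A ^ κ * ρ x)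
    {B d e : ℝ} (hB : 0 < B) (hd : 0 < d) (he : 0 < e) :
    pradF ρ (B * d, B * e) = B ^ κ * pradF ρ (d, e) := by
  have hρ := hhom B hB (d, e) hd he
  have hρ' := fderiv_apply_of_homogeneous hhom hB hd he (1, 0)
  simp only [pradF] at hρ ⊢
  linear_combination d * hρ' - hρ

theorem qF_of_homogeneous
    (hhom : ∀ A > (0 : ℝ), ∀ x : ℝ × ℝ, 0 < x.1 → 0 < x.2 → ρ (A * x.1, A * x.2) = A ^ κ * ρ x)
    {B d e : ℝ} (hB : 0 < B) (hd : 0 < d) (he : 0 < e) :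
    qF ρ (B * d, B * e) = B ^ κ * qF ρ (d, e) := by
  have hρ' := fderiv_apply_of_homogeneous hhom hB hd he (0, 1)
  simp only [qF, ptanF]
  linear_combination (3 / 2) * e * hρ'

theorem hasDerivAt_pradF_rescale
    (hhom : ∀ A > (0 : ℝ), ∀ x : ℝ × ℝ, 0 < x.1 → 0 < x.2 → ρ (A * x.1, A * x.2) = A ^ κ * ρ x)
    {s : Set ℝ} (hs : IsOpen s) {δ η : ℝ → ℝ} (hδ : ∀ r ∈ s, 0 < δ r) (hη : ∀ r ∈ s, 0 < η r)
    {A B r p' : ℝ} (hB : 0 < B) (hr : A * r ∈ s)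
    (hp : HasDerivAt (fun u => pradF ρ (δ u, η u)) p' (A * r)) :
    HasDerivAt (fun u => pradF ρ (B * δ (A * u), B * η (A * u))) (B ^ κ * (A * p')) r := by
  have hnear : ∀ᶠ u in 𝓝 r, A * u ∈ s :=
    (continuous_const_mul A).continuousAt.preimage_mem_nhds (hs.mem_nhds hr)
  refine (hp.comp_const_mul.const_mul (B ^ κ)).congr_of_eventuallyEq ?_
  filter_upwards [hnear] with u hu
  exact pradF_of_homogeneous hhom hB (hδ _ hu) (hη _ hu)

end Homogeneous

theorem tov_scale_invariance_general
    (κ : ℝ) (hκ : κ ≠ 0)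
    (ρ : ℝ × ℝ → ℝ)
    (hhom : ∀ A > (0 : ℝ), ∀ x : ℝ × ℝ, 0 < x.1 → 0 < x.2 →
      ρ (A * x.1, A * x.2) = A ^ κ * ρ x)
    (a b : ℝ)
    (δ η m : ℝ → ℝ)
    (hδpos : ∀ r ∈ Ioo a b, 0 < δ r) (hηpos : ∀ r ∈ Ioo a b, 0 < η r)
    (hmd : ∀ r ∈ Ioo a b, HasDerivAt m (4 * π * r ^ 2 * ρ (δ r, η r)) r)
    (hηd : ∀ r ∈ Ioo a b,
      HasDerivAt η (-(3 / r) * (η r - δ r * (1 - 2 * m r / r) ^ (-(1 : ℝ) / 2))) r)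
    (htov : ∀ r ∈ Ioo a b,
      HasDerivAt (fun u => pradF ρ (δ u, η u))
        ((2 / r) * qF ρ (δ r, η r)
          - (ρ (δ r, η r) + pradF ρ (δ r, η r))
              * (m r / r ^ 2 + 4 * π * r * pradF ρ (δ r, η r)) / (1 - 2 * m r / r)) r) :
    ∀ A > (0 : ℝ), ∀ r : ℝ, A * r ∈ Ioo a b →
      HasDerivAt (fun u => A⁻¹ * m (A * u))
        (4 * π * r ^ 2 * ρ (A ^ (2 / κ) * δ (A * r), A ^ (2 / κ) * η (A * r))) r ∧
      HasDerivAt (fun u => A ^ (2 / κ) * η (A * u))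
        (-(3 / r) * (A ^ (2 / κ) * η (A * r)
          - A ^ (2 / κ) * δ (A * r) * (1 - 2 * (A⁻¹ * m (A * r)) / r) ^ (-(1 : ℝ) / 2))) r ∧
      HasDerivAt (fun u => pradF ρ (A ^ (2 / κ) * δ (A * u), A ^ (2 / κ) * η (A * u)))
        ((2 / r) * qF ρ (A ^ (2 / κ) * δ (A * r), A ^ (2 / κ) * η (A * r))
          - (ρ (A ^ (2 / κ) * δ (A * r), A ^ (2 / κ) * η (A * r))
              + pradF ρ (A ^ (2 / κ) * δ (A * r), A ^ (2 / κ) * η (A * r)))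
            * ((A⁻¹ * m (A * r)) / r ^ 2
              + 4 * π * r * pradF ρ (A ^ (2 / κ) * δ (A * r), A ^ (2 / κ) * η (A * r)))
            / (1 - 2 * (A⁻¹ * m (A * r)) / r)) r := by
  intro A hA r hr
  have hB : 0 < A ^ (2 / κ) := rpow_pos_of_pos hA _
  have hBκ : (A ^ (2 / κ)) ^ κ = A ^ 2 := by
    rw [← rpow_mul hA.le, div_mul_cancel₀ _ hκ, rpow_two]
  have hρA := hhom _ hB (δ (A * r), η (A * r)) (hδpos _ hr) (hηpos _ hr)
  have hpA := pradF_of_homogeneous hhom hB (hδpos _ hr) (hηpos _ hr)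
  have hqA := qF_of_homogeneous hhom hB (hδpos _ hr) (hηpos _ hr)
  simp only [hBκ] at hρA hpA hqA
  refine ⟨?_, ?_, ?_⟩
  · refine ((hmd _ hr).comp_const_mul.const_mul A⁻¹).congr_deriv ?_
    rw [hρA, smul_eq_mul]
    field_simp
  · refine ((hηd _ hr).comp_const_mul.const_mul (A ^ (2 / κ))).congr_deriv ?_
    rw [smul_eq_mul]
    field_simp
  · refine (hasDerivAt_pradF_rescale hhom isOpen_Ioo hδpos hηpos hB hr (htov _ hr)).congr_deriv ?_
    rw [hρA, hpA, hqA, hBκ]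
    field_simp

/-- Proposition (relativistic scale invariance of the TOV equations): if the energy
density `ρ̂` is positively homogeneous of degree `κ ≠ 0` and `(δ, η, m)` solves the
static spherically symmetric Einstein-elastic equations on the open interval `(a,b)`,
then for every `A > 0` the rescaled profiles `δ_A(r) = A^{2/κ}δ(Ar)`,
`η_A(r) = A^{2/κ}η(Ar)`, `m_A(r) = A⁻¹m(Ar)` solve the same equations on `A⁻¹(a,b)`. -/
theorem tov_scale_invariance
    (κ : ℝ) (hκ : κ ≠ 0)
    (ρ : ℝ × ℝ → ℝ) (hρ : ContDiffOn ℝ 1 ρ (Ioi 0 ×ˢ Ioi 0))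
    (hhom : ∀ A > (0 : ℝ), ∀ x : ℝ × ℝ, 0 < x.1 → 0 < x.2 →
      ρ (A * x.1, A * x.2) = A ^ κ * ρ x)
    (a b : ℝ) (ha : 0 ≤ a)
    (δ η m : ℝ → ℝ)
    (hδpos : ∀ r ∈ Ioo a b, 0 < δ r) (hηpos : ∀ r ∈ Ioo a b, 0 < η r)
    (hhor : ∀ r ∈ Ioo a b, 2 * m r < r)
    (hmd : ∀ r ∈ Ioo a b, HasDerivAt m (4 * π * r ^ 2 * ρ (δ r, η r)) r)
    (hηd : ∀ r ∈ Ioo a b,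
      HasDerivAt η (-(3 / r) * (η r - δ r * (1 - 2 * m r / r) ^ (-(1 : ℝ) / 2))) r)
    (htov : ∀ r ∈ Ioo a b,
      HasDerivAt (fun u => pradF ρ (δ u, η u))
        ((2 / r) * qF ρ (δ r, η r)
          - (ρ (δ r, η r) + pradF ρ (δ r, η r))
              * (m r / r ^ 2 + 4 * π * r * pradF ρ (δ r, η r)) / (1 - 2 * m r / r)) r) :
    ∀ A > (0 : ℝ), ∀ r : ℝ, A * r ∈ Ioo a b →
      HasDerivAt (fun u => A⁻¹ * m (A * u))
        (4 * π * r ^ 2 * ρ (A ^ (2 / κ) * δ (A * r), A ^ (2 / κ) * η (A * r))) r ∧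
      HasDerivAt (fun u => A ^ (2 / κ) * η (A * u))
        (-(3 / r) * (A ^ (2 / κ) * η (A * r)
          - A ^ (2 / κ) * δ (A * r) * (1 - 2 * (A⁻¹ * m (A * r)) / r) ^ (-(1 : ℝ) / 2))) r ∧
      HasDerivAt (fun u => pradF ρ (A ^ (2 / κ) * δ (A * u), A ^ (2 / κ) * η (A * u)))
        ((2 / r) * qF ρ (A ^ (2 / κ) * δ (A * r), A ^ (2 / κ) * η (A * r))
          - (ρ (A ^ (2 / κ) * δ (A * r), A ^ (2 / κ) * η (A * r))
              + pradF ρ (A ^ (2 / κ) * δ (A * r), A ^ (2 / κ) * η (A * r)))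
            * ((A⁻¹ * m (A * r)) / r ^ 2
              + 4 * π * r * pradF ρ (A ^ (2 / κ) * δ (A * r), A ^ (2 / κ) * η (A * r)))
            / (1 - 2 * (A⁻¹ * m (A * r)) / r)) r :=
  tov_scale_invariance_general κ hκ ρ hhom a b δ η m hδpos hηpos hmd hηd htov
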